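/- arXiv:1801.02847 — 3 statements merged into one kernel-verified Lean document; each statement's English description precedes it below -/
import Mathlib

section
/- Let Ω ⊆ ℝⁿ be an open set and T : Ω → ℝ a continuous function. Assume the following smoothing property: for every x₀ ∈ Ω such that T is semiconcave on some open convex neighborhood of x₀ contained in Ω and the proximal subdifferential ∂_P T(x₀) is nonempty, T is C^∞ on some open neighborhood of x₀. Then the singular support of T equals the C^{1,1} singular support of T, i.e. sing supp T = sing supp_{C^{1,1}} T. -/
open Metric

/-- Quadratic Taylor estimate for a function whose derivative is `K`-Lipschitz on a convex set. -/
lemma quad_estimate {n : ℕ} {T : EuclideanSpace ℝ (Fin n) → ℝ}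
    {g : EuclideanSpace ℝ (Fin n) → (EuclideanSpace ℝ (Fin n) →L[ℝ] ℝ)} {K : NNReal}
    {U : Set (EuclideanSpace ℝ (Fin n))}
    (hder : ∀ y ∈ U, HasFDerivAt T (g y) y) (hlip : LipschitzOnWith K g U)
    {a b : EuclideanSpace ℝ (Fin n)} (ha : a ∈ U) (hb : b ∈ U)
    (hseg : segment ℝ a b ⊆ U) :
    ‖T b - T a - g a (b - a)‖ ≤ (K : ℝ) * ‖b - a‖ * ‖b - a‖ := by
  have h := (convex_segment a b).norm_image_sub_le_of_norm_hasFDerivWithin_le'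
    (f := T) (f' := g) (φ := g a) (C := (K : ℝ) * ‖b - a‖)
    (fun z hz => (hder z (hseg hz)).hasFDerivWithinAt)
    (fun z hz => by
      rcases hz with ⟨u, v, hu, hv, huv, rfl⟩
      have h1 : u • a + v • b - a = v • (b - a) := by
        rw [smul_sub]
        rw [show (u:ℝ) = 1 - v by linarith]
        module
      have h2 : dist (g (u • a + v • b)) (g a) ≤ (K : ℝ) * dist (u • a + v • b) a :=
        hlip.dist_le_mul _ (hseg ⟨u, v, hu, hv, huv, rfl⟩) _ ha
      rw [dist_eq_norm, dist_eq_norm, h1, norm_smul] at h2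
      calc ‖g (u • a + v • b) - g a‖ ≤ (K : ℝ) * (‖v‖ * ‖b - a‖) := h2
        _ ≤ (K : ℝ) * (1 * ‖b - a‖) := by
            gcongr
            rw [Real.norm_eq_abs, abs_of_nonneg hv]; linarith
        _ = (K : ℝ) * ‖b - a‖ := by ring)
    (left_mem_segment ℝ a b) (right_mem_segment ℝ a b)
  linarith [h]

/-- If `T : Ω → ℝ` (Ω ⊆ ℝⁿ open) is continuous and satisfies the smoothing
property (semiconcavity near a point plus nonempty proximal subdifferential at the point
implies smoothness near the point), then the singular support of `T` coincides with its
`C^{1,1}` singular support. -/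
theorem sing_supp_eq_sing_supp_C11
    {n : ℕ} (Ω : Set (EuclideanSpace ℝ (Fin n))) (hΩ : IsOpen Ω)
    (T : EuclideanSpace ℝ (Fin n) → ℝ) (hT : ContinuousOn T Ω)
    (smoothing : ∀ x₀ ∈ Ω,
      (∃ U : Set (EuclideanSpace ℝ (Fin n)), IsOpen U ∧ Convex ℝ U ∧ x₀ ∈ U ∧ U ⊆ Ω ∧
        ∃ C : ℝ, 0 ≤ C ∧ ConcaveOn ℝ U (fun x => T x - C / 2 * ‖x‖ ^ 2)) →
      (∃ p : EuclideanSpace ℝ (Fin n), ∃ c ρ : ℝ, 0 < c ∧ 0 < ρ ∧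
        ∀ y ∈ ball x₀ ρ ∩ Ω, T y - T x₀ - (inner ℝ p (y - x₀) : ℝ) ≥ -c * ‖y - x₀‖ ^ 2) →
      ∃ U : Set (EuclideanSpace ℝ (Fin n)), IsOpen U ∧ x₀ ∈ U ∧ U ⊆ Ω ∧
        ContDiffOn ℝ (⊤ : ℕ∞) T U) :
    -- sing supp T = sing supp_{C^{1,1}} T
    {x ∈ Ω | ¬ ∃ U : Set (EuclideanSpace ℝ (Fin n)),
        IsOpen U ∧ x ∈ U ∧ U ⊆ Ω ∧ ContDiffOn ℝ (⊤ : ℕ∞) T U} =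
    {x ∈ Ω | ¬ ∃ (U : Set (EuclideanSpace ℝ (Fin n)))
        (g : EuclideanSpace ℝ (Fin n) → (EuclideanSpace ℝ (Fin n) →L[ℝ] ℝ)) (K : NNReal),
        IsOpen U ∧ x ∈ U ∧ U ⊆ Ω ∧ (∀ y ∈ U, HasFDerivAt T (g y) y) ∧
        LipschitzOnWith K g U} := by
  ext x
  simp only [Set.mem_setOf_eq]
  refine and_congr_right fun hx => not_congr ⟨?_, ?_⟩
  · -- smooth ⇒ C^{1,1}
    rintro ⟨U, hU, hxU, hUΩ, hsm⟩
    have hca : ContDiffAt ℝ (⊤ : ℕ∞) T x := hsm.contDiffAt (hU.mem_nhds hxU)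
    have h2 : ContDiffAt ℝ 2 T x := hca.of_le (WithTop.coe_le_coe.mpr (le_top : (2 : ℕ∞) ≤ ⊤))
    have h1 : ContDiffAt ℝ 1 (fderiv ℝ T) x := h2.fderiv_right (by norm_num)
    obtain ⟨K, t, ht, hlip⟩ := h1.exists_lipschitzOnWith
    refine ⟨interior t ∩ U, fderiv ℝ T, K, isOpen_interior.inter hU,
      ⟨mem_interior_iff_mem_nhds.mpr ht, hxU⟩, fun y hy => hUΩ hy.2, ?_, ?_⟩
    · intro y hy
      exact ((hsm.contDiffAt (hU.mem_nhds hy.2)).differentiableAt (by simp)).hasFDerivAt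
    · exact hlip.mono fun y hy => interior_subset hy.1
  · -- C^{1,1} ⇒ smooth (via smoothing)
    rintro ⟨U, g, K, hU, hxU, hUΩ, hder, hlip⟩
    obtain ⟨r, hr, hball⟩ := Metric.isOpen_iff.mp hU x hxU
    have hballΩ : ball x r ⊆ Ω := hball.trans hUΩ
    have hsub : ∀ a ∈ ball x r, ∀ b ∈ ball x r, segment ℝ a b ⊆ U :=
      fun a ha b hb => ((convex_ball x r).segment_subset ha hb).trans hball
    have hquad : ∀ a ∈ ball x r, ∀ b ∈ ball x r,
        ‖T b - T a - g a (b - a)‖ ≤ (K : ℝ) * ‖b - a‖ * ‖b - a‖ :=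
      fun a ha b hb => quad_estimate hder hlip (hball ha) (hball hb) (hsub a ha b hb)
    apply smoothing x hx
    · -- semiconcavity on ball x r with C = 2K
      refine ⟨ball x r, isOpen_ball, convex_ball x r, mem_ball_self hr, hballΩ,
        2 * K, by positivity, convex_ball x r, ?_⟩
      intro a ha b hb u v hu hv huv
      simp only [smul_eq_mul]
      set z := u • a + v • b with hz
      have hzball : z ∈ ball x r := (convex_ball x r) ha hb hu hv huv
      have haz : a - z = v • (a - b) := by
        rw [hz, smul_sub]; rw [show (v:ℝ) = 1 - u by linarith]; module
      have hbz : b - z = u • (b - a) := by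
        rw [hz, smul_sub]; rw [show (u:ℝ) = 1 - v by linarith]; module
      have hqa := hquad z hzball a ha
      have hqb := hquad z hzball b hb
      rw [haz, norm_smul, Real.norm_of_nonneg hv] at hqa
      rw [hbz, norm_smul, Real.norm_of_nonneg hu] at hqb
      have hga : g z (a - z) = v * (g z (a - b)) := by rw [haz, map_smul]; rfl
      have hgb : g z (b - z) = u * (g z (b - a)) := by rw [hbz, map_smul]; rfl
      have hgsum : u * (g z (a - z)) + v * (g z (b - z)) = 0 := by
        rw [hga, hgb, show b - a = -(a - b) by abel, map_neg]
        ring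
      have hqa' : T a - T z - g z (a - z) ≤ K * (v * ‖a - b‖) * (v * ‖a - b‖) := by
        rw [haz]; exact le_trans (Real.le_norm_self _) hqa
      have hqb' : T b - T z - g z (b - z) ≤ K * (u * ‖b - a‖) * (u * ‖b - a‖) := by
        rw [hbz]; exact le_trans (Real.le_norm_self _) hqb
      -- norm identity
      have hnorm : u * ‖a‖ ^ 2 + v * ‖b‖ ^ 2 - ‖z‖ ^ 2 = u * v * ‖a - b‖ ^ 2 := by
        have e1 : ‖z‖ ^ 2 = (inner ℝ z z : ℝ) := (real_inner_self_eq_norm_sq z).symm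
        have e2 : ‖a - b‖ ^ 2 = (inner ℝ (a - b) (a - b) : ℝ) :=
          (real_inner_self_eq_norm_sq _).symm
        have e3 : ‖a‖ ^ 2 = (inner ℝ a a : ℝ) := (real_inner_self_eq_norm_sq a).symm
        have e4 : ‖b‖ ^ 2 = (inner ℝ b b : ℝ) := (real_inner_self_eq_norm_sq b).symm
        rw [e1, e2, e3, e4, hz]
        simp only [inner_add_add_self, inner_sub_sub_self, real_inner_smul_left,
          real_inner_smul_right]
        have hv1 : v = 1 - u := by linarith
        subst hv1
        ring
      have hba : ‖b - a‖ = ‖a - b‖ := by rw [← neg_sub a b, norm_neg]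
      rw [hba] at hqb'
      set N := ‖a - b‖ with hN
      have key : u * T a + v * T b - T z ≤ (K : ℝ) * (u * v) * N ^ 2 := by
        have A := mul_le_mul_of_nonneg_left hqa' hu
        have B := mul_le_mul_of_nonneg_left hqb' hv
        have hAB := add_le_add A B
        have lhs_eq : u * T a + v * T b - T z =
            u * (T a - T z - g z (a - z)) + v * (T b - T z - g z (b - z))
            + (u * g z (a - z) + v * g z (b - z)) + (u + v - 1) * T z := by ring
        rw [lhs_eq, hgsum, huv]
        have rhs_eq : u * ((K : ℝ) * (v * N) * (v * N)) + v * ((K : ℝ) * (u * N) * (u * N))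
            = (K : ℝ) * (u * v) * N ^ 2 * (u + v) := by ring
        rw [rhs_eq, huv, mul_one] at hAB
        linarith
      have hn2 : (K : ℝ) * (u * ‖a‖ ^ 2) + (K : ℝ) * (v * ‖b‖ ^ 2) - (K : ℝ) * ‖z‖ ^ 2
          = (K : ℝ) * (u * v) * N ^ 2 := by linear_combination (K : ℝ) * hnorm
      linarith [key, hn2]
    · -- proximal subgradient
      refine ⟨(InnerProductSpace.toDual ℝ _).symm (g x), (K : ℝ) + 1, r,
        by positivity, hr, ?_⟩
      rintro y ⟨hy, -⟩
      have hq := hquad x (mem_ball_self hr) y hy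
      have : (inner ℝ ((InnerProductSpace.toDual ℝ _).symm (g x)) (y - x) : ℝ) = g x (y - x) :=
        InnerProductSpace.toDual_symm_apply
      rw [this]
      have h1 : -(T y - T x - g x (y - x)) ≤ (K : ℝ) * ‖y - x‖ * ‖y - x‖ := by
        rw [← norm_neg] at hq; exact le_trans (Real.le_norm_self _) hq
      nlinarith [sq_nonneg (‖y - x‖), norm_nonneg (y - x)]
end

section
/- Let Ω ⊆ ℝⁿ be an open set and T : Ω → ℝ a continuous function. Assume: (i) there exists a set S ⊆ Ω, closed in Ω and of Lebesgue measure zero, such that T is locally semiconcave on Ω \ S; (ii) for every x₀ ∈ Ω such that T is semiconcave on some open convex neighborhood of x₀ contained in Ω and ∂_P T(x₀) is nonempty, T is C^∞ on some open neighborhood of x₀. Then the singular support of T has Lebesgue measure zero. -/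
open Metric MeasureTheory Set ENNReal NNReal RealInnerProductSpace Filter Topology

noncomputable section

/-- Abbreviation for Euclidean space used in the auxiliary lemmas. -/
abbrev Euc (n : ℕ) := EuclideanSpace ℝ (Fin n)

-- Lipschitz image volume bound on Euclidean space
lemma lip_image_vol (n : ℕ) :
    ∃ C : ℝ≥0∞, 0 < C ∧ C < ⊤ ∧ ∀ (F : Euc n → Euc n) (K : Set (Euc n)),
      LipschitzOnWith 9 F K → volume (F '' K) ≤ C * volume K := by
  classical
  set e := (MeasurableEquiv.toLp 2 (Fin n → ℝ)).symm with he
  set q : Euc n ≃ (Fin n → ℝ) := WithLp.equiv 2 (Fin n → ℝ) with hqdef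
  have hq1 : LipschitzWith 1 (⇑q) := PiLp.lipschitzWith_ofLp 2 _
  have hq2 : LipschitzWith ((Fintype.card (Fin n) : ℝ≥0) ^ ((1:ℝ≥0∞) / 2).toReal) (⇑q.symm) :=
    PiLp.lipschitzWith_toLp 2 _
  set c0 : ℝ≥0 := (Fintype.card (Fin n) : ℝ≥0) ^ ((1:ℝ≥0∞) / 2).toReal with hc0
  have hq2' : LipschitzWith (c0 + 1) (⇑q.symm) := hq2.weaken (by simp)
  set L : ℝ≥0 := 1 * (9 * (c0 + 1) * (c0 + 1)) with hL
  refine ⟨(L : ℝ≥0∞) ^ (n : ℝ), ?_, ?_, ?_⟩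
  · apply ENNReal.rpow_pos
    · exact_mod_cast (by positivity : (0:ℝ) < (L:ℝ))
    · exact ENNReal.coe_ne_top
  · exact ENNReal.rpow_lt_top_of_nonneg (by positivity) ENNReal.coe_ne_top
  · intro F K hF
    -- the transported map
    have hvol : ∀ A : Set (Euc n), volume (⇑q '' A) = volume A := by
      intro A
      have h1 : (volume : Measure (Fin n → ℝ)) (⇑q '' A)
          = Measure.map e volume (⇑q '' A) := by
        rw [(EuclideanSpace.volume_preserving_symm_measurableEquiv_toLp (Fin n)).map_eq]
      rw [h1, MeasurableEquiv.map_apply]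
      congr 1
      have hcoe : ⇑e = ⇑q := rfl
      rw [hcoe]
      exact q.preimage_image A
    have hG : LipschitzOnWith L (⇑q ∘ F ∘ ⇑q.symm) (⇑q '' K) := by
      apply hq1.comp_lipschitzOnWith
      have h9 : (9:ℝ≥0) ≤ 9 * (c0+1) := by
        calc (9:ℝ≥0) = 9 * 1 := by ring
        _ ≤ 9 * (c0 + 1) := mul_le_mul_right (le_add_self) _
      have hF' : LipschitzOnWith (9 * (c0+1)) F K := fun x hx y hy =>
        le_trans (hF hx hy) (mul_le_mul_left (ENNReal.coe_le_coe.2 h9) _)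
      apply hF'.comp hq2'.lipschitzOnWith
      intro x hx
      rcases hx with ⟨y, hy, rfl⟩
      simpa using hy
    have him : (⇑q ∘ F ∘ ⇑q.symm) '' (⇑q '' K) = ⇑q '' (F '' K) := by
      rw [Set.image_image]
      ext x; constructor
      · rintro ⟨y, hy, rfl⟩; exact ⟨F y, ⟨y, hy, rfl⟩, by simp⟩
      · rintro ⟨z, ⟨y, hy, rfl⟩, rfl⟩; exact ⟨y, hy, by simp⟩
    have hH := hG.hausdorffMeasure_image_le (d := (n : ℝ)) (by positivity)
    rw [him] at hH
    have hHn : (μH[(n:ℝ)] : Measure (Fin n → ℝ)) = volume := by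
      have := hausdorffMeasure_pi_real (ι := Fin n)
      simpa [Fintype.card_fin] using this
    rw [hHn] at hH
    calc volume (F '' K) = volume (⇑q '' (F '' K)) := (hvol _).symm
      _ ≤ (L : ℝ≥0∞) ^ (n:ℝ) * volume (⇑q '' K) := hH
      _ = (L : ℝ≥0∞) ^ (n:ℝ) * volume K := by rw [hvol]


variable {n : ℕ}

/-- At any constrained minimizer of `ψ + c‖· - x₀‖²`, ψ has a (one-inequality) proximal-type
lower bound. -/
lemma minToProx {c : ℝ} {ψ : Euc n → ℝ} {z x₀ y : Euc n}
    (h : ψ z + c * ‖z - x₀‖^2 ≤ ψ y + c * ‖y - x₀‖^2) :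
    ψ y - ψ z - 2*c*⟪x₀ - z, y - z⟫ ≥ -c * ‖y - z‖^2 := by
  have hyd : y - x₀ = (y - z) + (z - x₀) := by abel
  have key : ‖y - x₀‖^2 = ‖y - z‖^2 + 2*⟪y - z, z - x₀⟫ + ‖z - x₀‖^2 := by
    rw [hyd, norm_add_sq_real]
  have hin : ⟪y - z, z - x₀⟫ = -⟪x₀ - z, y - z⟫ := by
    rw [real_inner_comm]
    rw [show z - x₀ = -(x₀ - z) by abel, inner_neg_left]
  have e1 : c * ‖y - x₀‖^2
      = c * ‖y - z‖^2 - 2*c*⟪x₀ - z, y - z⟫ + c * ‖z - x₀‖^2 := by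
    rw [key, hin]; ring
  nlinarith [h, e1]

set_option maxHeartbeats 1000000 in
lemma coLip {ψ : Euc n → ℝ} {xb : Euc n} {s c : ℝ} (hs : 0 < s) (hc : 0 < c)
    (hconc : ConcaveOn ℝ (closedBall xb (2*s)) ψ)
    {z₁ z₂ x₁ x₂ : Euc n}
    (hz₁ : z₁ ∈ closedBall xb s) (hz₂ : z₂ ∈ closedBall xb s)
    (hd₁ : ‖z₁ - x₁‖ ≤ s/2) (hd₂ : ‖z₂ - x₂‖ ≤ s/2)
    (h₁ : ∀ y ∈ closedBall xb (2*s), ψ z₁ + c*‖z₁ - x₁‖^2 ≤ ψ y + c*‖y - x₁‖^2)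
    (h₂ : ∀ y ∈ closedBall xb (2*s), ψ z₂ + c*‖z₂ - x₂‖^2 ≤ ψ y + c*‖y - x₂‖^2) :
    ‖x₁ - x₂‖ ≤ 9 * ‖z₁ - z₂‖ := by
  set v : Euc n := (x₁ - z₁) - (x₂ - z₂) with hvdef
  set A : ℝ := ‖v‖ with hA
  set d : ℝ := ‖z₁ - z₂‖ with hd
  have hd0 : 0 ≤ d := norm_nonneg _
  have hA0 : 0 ≤ A := norm_nonneg _
  have hxx : ‖x₁ - x₂‖ ≤ A + d := by
    have hi : x₁ - x₂ = v + (z₁ - z₂) := by rw [hvdef]; abel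
    rw [hi]; exact norm_add_le _ _
  suffices hv8 : A ≤ 8*d by linarith
  by_contra hcon
  push_neg at hcon
  have hApos : 0 < A := lt_of_le_of_lt (by positivity) hcon
  have hvle : A ≤ s := by
    have h1 : A ≤ ‖x₁ - z₁‖ + ‖x₂ - z₂‖ := norm_sub_le _ _
    rw [norm_sub_rev x₁ z₁, norm_sub_rev x₂ z₂] at h1
    linarith
  -- membership facts
  have hz₁' : z₁ ∈ closedBall xb (2*s) := by
    rw [mem_closedBall] at hz₁ ⊢; linarith
  have hz₂' : z₂ ∈ closedBall xb (2*s) := by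
    rw [mem_closedBall] at hz₂ ⊢; linarith
  set y : Euc n := z₁ - (4:ℝ)⁻¹ • v with hydef
  set y' : Euc n := z₁ + (4:ℝ)⁻¹ • v with hy'def
  have hyz : ‖y - z₁‖ = 4⁻¹ * A := by
    rw [hydef]; rw [show z₁ - (4:ℝ)⁻¹ • v - z₁ = -((4:ℝ)⁻¹ • v) by abel]
    rw [norm_neg, norm_smul]; norm_num [hA]
  have hy'z : ‖y' - z₁‖ = 4⁻¹ * A := by
    rw [hy'def]; rw [show z₁ + (4:ℝ)⁻¹ • v - z₁ = (4:ℝ)⁻¹ • v by abel]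
    rw [norm_smul]; norm_num [hA]
  have hy2s : y ∈ closedBall xb (2*s) := by
    rw [mem_closedBall] at hz₁ ⊢
    calc dist y xb ≤ dist y z₁ + dist z₁ xb := dist_triangle _ _ _
      _ ≤ 4⁻¹ * A + s := by
          rw [dist_eq_norm, hyz]; linarith
      _ ≤ 2*s := by linarith
  have hy'2s : y' ∈ closedBall xb (2*s) := by
    rw [mem_closedBall] at hz₁ ⊢
    calc dist y' xb ≤ dist y' z₁ + dist z₁ xb := dist_triangle _ _ _
      _ ≤ 4⁻¹ * A + s := by
          rw [dist_eq_norm, hy'z]; linarith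
      _ ≤ 2*s := by linarith
  -- concavity midpoint
  have hmid : z₁ = (1/2:ℝ) • y + (1/2:ℝ) • y' := by
    rw [hydef, hy'def]; module
  have hcc : (1/2:ℝ) * ψ y + (1/2:ℝ) * ψ y' ≤ ψ z₁ := by
    have := hconc.2 hy2s hy'2s (by norm_num : (0:ℝ) ≤ 1/2) (by norm_num : (0:ℝ) ≤ 1/2)
      (by norm_num : (1/2:ℝ) + 1/2 = 1)
    rw [← hmid] at this
    simpa using this
  -- the three prox inequalities
  have hU1y' := minToProx (h₁ y' hy'2s)
  have hU2y := minToProx (h₂ y hy2s)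
  have hU1z2 := minToProx (h₁ z₂ hz₂')
  -- scalar atoms
  set I₁ : ℝ := ⟪x₁ - z₁, v⟫ with hI₁
  set I₂ : ℝ := ⟪x₂ - z₂, v⟫ with hI₂
  set J₁ : ℝ := ⟪x₁ - z₁, z₂ - z₁⟫ with hJ₁
  set J₂ : ℝ := ⟪x₂ - z₂, z₁ - z₂⟫ with hJ₂
  -- rewrite inner products
  have e1 : ⟪x₁ - z₁, y' - z₁⟫ = 4⁻¹ * I₁ := by
    rw [show y' - z₁ = (4:ℝ)⁻¹ • v by rw [hy'def]; abel, real_inner_smul_right]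
  have e2 : ⟪x₂ - z₂, y - z₂⟫ = J₂ - 4⁻¹ * I₂ := by
    rw [show y - z₂ = (z₁ - z₂) - (4:ℝ)⁻¹ • v by rw [hydef]; abel, inner_sub_right,
      real_inner_smul_right]
  have e3 : ⟪x₁ - z₁, z₂ - z₁⟫ = J₁ := rfl
  have hIeq : I₁ - I₂ = A^2 := by
    rw [hI₁, hI₂, ← inner_sub_left, ← hvdef, hA, real_inner_self_eq_norm_sq]
  have hJsum : -(A*d) ≤ J₁ + J₂ := by
    have h1 : J₁ + J₂ = ⟪v, z₂ - z₁⟫ := by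
      rw [hJ₁, hJ₂, hvdef, inner_sub_left,
        show z₁ - z₂ = -(z₂ - z₁) by abel, inner_neg_right]
      simp [inner_sub_left]
      ring
    have h2 : |⟪v, z₂ - z₁⟫| ≤ A * d := by
      rw [hA, hd, norm_sub_rev z₁ z₂]
      exact abs_real_inner_le_norm _ _
    rw [h1]
    have := abs_le.1 h2
    linarith [this.1]
  have hsqy : ‖y - z₂‖^2 ≤ (d + 4⁻¹*A)^2 := by
    have h1 : ‖y - z₂‖ ≤ d + 4⁻¹*A := by
      have : y - z₂ = (z₁ - z₂) - (4:ℝ)⁻¹ • v := by rw [hydef]; abel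
      rw [this]
      refine le_trans (norm_sub_le _ _) ?_
      rw [norm_smul]; rw [hd]; norm_num [hA]
    have h0 : (0:ℝ) ≤ ‖y - z₂‖ := norm_nonneg _
    nlinarith
  have hny' : ‖y' - z₁‖^2 = (4⁻¹*A)^2 := by rw [hy'z]
  have hnz2 : ‖z₂ - z₁‖^2 = d^2 := by rw [hd, norm_sub_rev]
  -- rewrite the prox inequalities in atoms
  rw [e1, hny'] at hU1y'
  rw [e2] at hU2y
  rw [hnz2] at hU1z2
  -- multiplied versions of the auxiliary bounds
  have hJc : c * (-(A*d)) ≤ c * (J₁ + J₂) := mul_le_mul_of_nonneg_left hJsum hc.le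
  have hsqc : c * ‖y - z₂‖^2 ≤ c * (d + 4⁻¹*A)^2 := mul_le_mul_of_nonneg_left hsqy hc.le
  have hIc : c * I₁ - c * I₂ = c * A^2 := by rw [← mul_sub, hIeq]
  -- main chained inequality
  have hmain : c * ((3/8)*A^2) ≤ c * ((5/2)*A*d + 2*d^2) := by linarith [hU1y', hU2y, hU1z2, hcc, hJc, hsqc, hIc]
  have hkey : (3/8)*A^2 ≤ (5/2)*A*d + 2*d^2 := le_of_mul_le_mul_left hmain hc
  have hd8 : d ≤ A/8 := by linarith
  have hm1 : A*d ≤ A*(A/8) := mul_le_mul_of_nonneg_left hd8 hA0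
  have hm2 : d^2 ≤ (A/8)^2 := pow_le_pow_left₀ hd0 hd8 2
  have hA2 : 0 < A^2 := by positivity
  linarith

set_option maxHeartbeats 1000000 in
lemma density_step {n : ℕ} {ψ : Euc n → ℝ} (hψ : Continuous ψ)
    {xb : Euc n} {s M : ℝ} (hs : 0 < s) (hM : 0 ≤ M)
    (hconc : ConcaveOn ℝ (closedBall xb (2*s)) ψ)
    (hbd : ∀ y ∈ closedBall xb (2*s), |ψ y| ≤ M)
    {Cvol : ℝ≥0∞}
    (hCvol : ∀ (F : Euc n → Euc n) (K : Set (Euc n)), LipschitzOnWith 9 F K →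
      volume (F '' K) ≤ Cvol * volume K) :
    ∃ K : Set (Euc n), IsCompact K ∧ K ⊆ closedBall xb s ∧
      volume (closedBall xb (s/2)) ≤ Cvol * volume K ∧
      ∀ z ∈ K, ∃ p : Euc n, ∃ c' : ℝ, 0 < c' ∧
        ∀ y ∈ closedBall xb (2*s), ψ y - ψ z - ⟪p, y - z⟫ ≥ -c' * ‖y - z‖^2 := by
  classical
  set c : ℝ := 8*(M+1)/s^2 with hcdef
  have hc : 0 < c := by positivity
  set P : Euc n → Euc n → Prop := fun z x₀ => ∀ y ∈ closedBall xb (2*s),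
      ψ z + c*‖z - x₀‖^2 ≤ ψ y + c*‖y - x₀‖^2 with hPdef
  set K : Set (Euc n) := closedBall xb s ∩ {z | ∃ x₀ ∈ closedBall xb (s/2), P z x₀} with hKdef
  have hKsub : K ⊆ closedBall xb s := Set.inter_subset_left
  have hK2s : ∀ z ∈ K, z ∈ closedBall xb (2*s) := by
    intro z hz
    have := hKsub hz
    rw [mem_closedBall] at this ⊢; linarith
  -- distance bound for witnesses
  have hwit : ∀ z ∈ closedBall xb (2*s), ∀ x₀ ∈ closedBall xb (s/2), P z x₀ →
      ‖z - x₀‖ ≤ s/2 := by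
    intro z hz x₀ hx₀ hp
    have hx₀' : x₀ ∈ closedBall xb (2*s) := by
      rw [mem_closedBall] at hx₀ ⊢; linarith
    have h1 := hp x₀ hx₀'
    simp only [sub_self, norm_zero] at h1
    have hb1 := abs_le.1 (hbd z hz)
    have hb2 := abs_le.1 (hbd x₀ hx₀')
    have h2 : c * ‖z - x₀‖^2 ≤ 2*M := by nlinarith [h1, hb1.1, hb2.2]
    have e : c * s^2 = 8*(M+1) := by
      rw [hcdef]; field_simp
    have ha0 : (0:ℝ) ≤ ‖z - x₀‖^2 := sq_nonneg _
    have F3 : 8*(M+1)*‖z - x₀‖^2 ≤ 2*M*s^2 := by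
      calc 8*(M+1)*‖z - x₀‖^2 = (c*s^2)*‖z - x₀‖^2 := by rw [e]
        _ = (c*‖z - x₀‖^2)*s^2 := by ring
        _ ≤ 2*M*s^2 := mul_le_mul_of_nonneg_right h2 (sq_nonneg s)
    have h3 : ‖z - x₀‖^2 ≤ (s/2)^2 := by nlinarith [F3, mul_nonneg hM ha0, sq_nonneg s, mul_pos hs hs]
    nlinarith [norm_nonneg (z - x₀), hs, h3]
  -- existence of minimizers
  have hcont : ∀ x₀ : Euc n, ContinuousOn (fun y => ψ y + c*‖y - x₀‖^2)
      (closedBall xb (2*s)) := by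
    intro x₀
    apply Continuous.continuousOn
    exact hψ.add (continuous_const.mul ((continuous_id.sub continuous_const).norm.pow 2))
  have hex : ∀ x₀ ∈ closedBall xb (s/2), ∃ z ∈ K, P z x₀ := by
    intro x₀ hx₀
    obtain ⟨z, hz2s, hmin⟩ := (isCompact_closedBall xb (2*s)).exists_isMinOn
      ⟨xb, mem_closedBall_self (by linarith)⟩ (hcont x₀)
    have hPz : P z x₀ := fun y hy => isMinOn_iff.1 hmin y hy
    have hzx : ‖z - x₀‖ ≤ s/2 := hwit z hz2s x₀ hx₀ hPz
    have hzK : z ∈ K := by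
      refine ⟨?_, ⟨x₀, hx₀, hPz⟩⟩
      rw [mem_closedBall] at hx₀ ⊢
      calc dist z xb ≤ dist z x₀ + dist x₀ xb := dist_triangle _ _ _
        _ ≤ s/2 + s/2 := by rw [dist_eq_norm]; exact add_le_add hzx hx₀
        _ = s := by ring
    exact ⟨z, hzK, hPz⟩
  -- the witness map
  set F : Euc n → Euc n := fun z =>
    if h : ∃ x₀ ∈ closedBall xb (s/2), P z x₀ then h.choose else z with hFdef
  have hFspec : ∀ z ∈ K, F z ∈ closedBall xb (s/2) ∧ P z (F z) := by
    intro z hz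
    have h' : ∃ x₀ ∈ closedBall xb (s/2), P z x₀ := hz.2
    have : F z = h'.choose := by rw [hFdef]; exact dif_pos h'
    rw [this]
    exact ⟨h'.choose_spec.1, h'.choose_spec.2⟩
  -- Lipschitz property of F on K
  have hFlip : LipschitzOnWith 9 F K := by
    apply LipschitzOnWith.of_dist_le_mul
    intro z₁ h₁ z₂ h₂
    obtain ⟨hm₁, hp₁⟩ := hFspec z₁ h₁
    obtain ⟨hm₂, hp₂⟩ := hFspec z₂ h₂
    rw [dist_eq_norm, dist_eq_norm]
    have h9 := coLip hs hc hconc (hKsub h₁) (hKsub h₂)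
      (hwit _ (hK2s _ h₁) _ hm₁ hp₁) (hwit _ (hK2s _ h₂) _ hm₂ hp₂) hp₁ hp₂
    calc ‖F z₁ - F z₂‖ ≤ 9 * ‖z₁ - z₂‖ := h9
      _ = (9:ℝ≥0) * ‖z₁ - z₂‖ := by norm_num
  -- surjectivity
  have hsurj : closedBall xb (s/2) ⊆ F '' K := by
    intro x₀ hx₀
    obtain ⟨z, hzK, hPz⟩ := hex x₀ hx₀
    obtain ⟨hm', hp'⟩ := hFspec z hzK
    have h0 : ‖x₀ - F z‖ ≤ 9 * ‖z - z‖ := coLip hs hc hconc (hKsub hzK) (hKsub hzK)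
      (hwit _ (hK2s _ hzK) _ hx₀ hPz) (hwit _ (hK2s _ hzK) _ hm' hp') hPz hp'
    rw [sub_self, norm_zero, mul_zero] at h0
    have : x₀ = F z := by
      have := norm_sub_eq_zero_iff.mp (le_antisymm h0 (norm_nonneg _))
      exact this
    exact ⟨z, hzK, this.symm⟩
  -- compactness
  have hKcomp : IsCompact K := by
    set Q : Set (Euc n × Euc n) := ((closedBall xb s) ×ˢ (closedBall xb (s/2))) ∩
      {q : Euc n × Euc n | ∀ y ∈ closedBall xb (2*s),
        ψ q.1 + c*‖q.1 - q.2‖^2 ≤ ψ y + c*‖y - q.2‖^2} with hQdef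
    have hQclosed : IsClosed {q : Euc n × Euc n | ∀ y ∈ closedBall xb (2*s),
        ψ q.1 + c*‖q.1 - q.2‖^2 ≤ ψ y + c*‖y - q.2‖^2} := by
      have : {q : Euc n × Euc n | ∀ y ∈ closedBall xb (2*s),
          ψ q.1 + c*‖q.1 - q.2‖^2 ≤ ψ y + c*‖y - q.2‖^2}
          = ⋂ y ∈ closedBall xb (2*s), {q : Euc n × Euc n |
            ψ q.1 + c*‖q.1 - q.2‖^2 ≤ ψ y + c*‖y - q.2‖^2} := by
        ext q; simp
      rw [this]
      refine isClosed_biInter fun y hy => isClosed_le ?_ ?_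
      · exact (hψ.comp continuous_fst).add
          (continuous_const.mul ((continuous_fst.sub continuous_snd).norm.pow 2))
      · exact continuous_const.add
          (continuous_const.mul ((continuous_const.sub continuous_snd).norm.pow 2))
    have hQcomp : IsCompact Q :=
      ((isCompact_closedBall _ _).prod (isCompact_closedBall _ _)).inter_right hQclosed
    have hKQ : K = Prod.fst '' Q := by
      ext z
      constructor
      · rintro ⟨hz1, x₀, hx₀, hP⟩
        exact ⟨(z, x₀), ⟨⟨hz1, hx₀⟩, hP⟩, rfl⟩
      · rintro ⟨⟨z', x₀⟩, ⟨⟨hz1, hx₀⟩, hP⟩, rfl⟩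
        exact ⟨hz1, x₀, hx₀, hP⟩
    rw [hKQ]
    exact hQcomp.image continuous_fst
  refine ⟨K, hKcomp, hKsub, ?_, ?_⟩
  · calc volume (closedBall xb (s/2)) ≤ volume (F '' K) := measure_mono hsurj
      _ ≤ Cvol * volume K := hCvol F K hFlip
  · intro z hz
    obtain ⟨hm, hp⟩ := hFspec z hz
    refine ⟨(2*c) • (F z - z), c, hc, ?_⟩
    intro y hy
    have h1 := minToProx (hp y hy)
    have h2 : ⟪(2*c) • (F z - z), y - z⟫ = 2*c*⟪F z - z, y - z⟫ :=
      real_inner_smul_left _ _ _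
    rw [h2]
    exact h1


set_option maxHeartbeats 1000000 in
/-- If `T : Ω → ℝ` (Ω ⊆ ℝⁿ open) is continuous, locally semiconcave outside
a set `S ⊆ Ω` which is closed in `Ω` and Lebesgue-null, and satisfies the smoothing property
(semiconcavity near a point plus nonempty proximal subdifferential at the point implies
smoothness near the point), then the singular support of `T` has Lebesgue measure zero. -/
theorem sing_supp_measure_zero
    {n : ℕ} (Ω : Set (EuclideanSpace ℝ (Fin n))) (hΩ : IsOpen Ω)
    (T : EuclideanSpace ℝ (Fin n) → ℝ) (hT : ContinuousOn T Ω)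
    (S : Set (EuclideanSpace ℝ (Fin n))) (hSΩ : S ⊆ Ω)
    (hSclosed : IsOpen (Ω \ S))  -- S is closed in Ω
    (hSnull : volume S = 0)
    (hsc : ∀ x ∈ Ω \ S,
      ∃ U : Set (EuclideanSpace ℝ (Fin n)), IsOpen U ∧ Convex ℝ U ∧ x ∈ U ∧ U ⊆ Ω \ S ∧
        ∃ C : ℝ, 0 ≤ C ∧ ConcaveOn ℝ U (fun y => T y - C / 2 * ‖y‖ ^ 2))
    (smoothing : ∀ x₀ ∈ Ω,
      (∃ U : Set (EuclideanSpace ℝ (Fin n)), IsOpen U ∧ Convex ℝ U ∧ x₀ ∈ U ∧ U ⊆ Ω ∧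
        ∃ C : ℝ, 0 ≤ C ∧ ConcaveOn ℝ U (fun x => T x - C / 2 * ‖x‖ ^ 2)) →
      (∃ p : EuclideanSpace ℝ (Fin n), ∃ c ρ : ℝ, 0 < c ∧ 0 < ρ ∧
        ∀ y ∈ ball x₀ ρ ∩ Ω, T y - T x₀ - (inner ℝ p (y - x₀) : ℝ) ≥ -c * ‖y - x₀‖ ^ 2) →
      ∃ U : Set (EuclideanSpace ℝ (Fin n)), IsOpen U ∧ x₀ ∈ U ∧ U ⊆ Ω ∧
        ContDiffOn ℝ (⊤ : ℕ∞) T U) :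
    volume {x ∈ Ω | ¬ ∃ U : Set (EuclideanSpace ℝ (Fin n)),
        IsOpen U ∧ x ∈ U ∧ U ⊆ Ω ∧ ContDiffOn ℝ (⊤ : ℕ∞) T U} = 0 := by
  classical
  set Bad : Set (Euc n) := {x ∈ Ω | ¬ ∃ U : Set (EuclideanSpace ℝ (Fin n)),
      IsOpen U ∧ x ∈ U ∧ U ⊆ Ω ∧ ContDiffOn ℝ (⊤ : ℕ∞) T U} with hBadDef
  show volume Bad = 0
  set D : Set (Euc n) := Bad ∩ (Ω \ S) with hDdef
  have hsplit : Bad ⊆ S ∪ D := by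
    intro x hx
    by_cases h : x ∈ S
    · exact Or.inl h
    · exact Or.inr ⟨hx, hx.1, h⟩
  have hDnull : volume D = 0 := by
    by_contra hpos
    obtain ⟨Cvol, hC0, hCtop, hCvol⟩ := lip_image_vol n
    -- find a density point of D inside D
    have hbes := Besicovitch.ae_tendsto_measure_inter_div (volume : Measure (Euc n)) D
    have hex : ∃ x ∈ D, Tendsto
        (fun r => volume (D ∩ closedBall x r) / volume (closedBall x r)) (𝓝[>] 0) (𝓝 1) := by
      by_contra hno
      push_neg at hno
      have hsub : D ⊆ {x | ¬ Tendsto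
          (fun r => volume (D ∩ closedBall x r) / volume (closedBall x r)) (𝓝[>] 0) (𝓝 1)} :=
        fun x hx => hno x hx
      have h0 : (volume.restrict D) {x | ¬ Tendsto
          (fun r => volume (D ∩ closedBall x r) / volume (closedBall x r)) (𝓝[>] 0) (𝓝 1)} = 0 :=
        ae_iff.1 hbes
      have : volume D = 0 := by
        have := measure_mono_null hsub h0
        rwa [Measure.restrict_apply_self] at this
      exact hpos this
    obtain ⟨x, hxD, hxTendsto⟩ := hex
    have hxΩS : x ∈ Ω \ S := hxD.2
    obtain ⟨U, hUopen, hUconv, hxU, hUsub, C, hC0', hCconc⟩ := hsc x hxΩS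
    have hUΩ : U ⊆ Ω := hUsub.trans diff_subset
    -- a radius
    obtain ⟨ε, hε, hball⟩ := Metric.isOpen_iff.1 hUopen x hxU
    set s₀ : ℝ := ε/5 with hs₀def
    have hs₀ : 0 < s₀ := by positivity
    have hcb2s₀ : closedBall x (2*s₀) ⊆ U := by
      refine subset_trans ?_ hball
      intro w hw
      rw [mem_closedBall] at hw
      rw [mem_ball]
      calc dist w x ≤ 2*s₀ := hw
        _ < ε := by rw [hs₀def]; linarith
    -- the function ψ and its Tietze extension
    set ψ : Euc n → ℝ := fun y => T y - C / 2 * ‖y‖ ^ 2 with hψdef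
    have hψcont : ContinuousOn ψ U := by
      apply ContinuousOn.sub (hT.mono hUΩ)
      exact (continuous_const.mul (continuous_norm.pow 2)).continuousOn
    have hclosed : IsClosed (closedBall x (2*s₀)) := Metric.isClosed_closedBall
    set f : C((closedBall x (2*s₀) : Set (Euc n)), ℝ) :=
      ⟨(closedBall x (2*s₀)).restrict ψ, (hψcont.mono hcb2s₀).restrict⟩ with hfdef
    obtain ⟨g, hg⟩ := ContinuousMap.exists_restrict_eq hclosed f
    have hgeq : ∀ y ∈ closedBall x (2*s₀), g y = ψ y := by
      intro y hy
      have := congrFun (congrArg DFunLike.coe hg) ⟨y, hy⟩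
      simp at this; exact this
    -- a bound for g on the ball
    obtain ⟨M₀, hM₀⟩ := (isCompact_closedBall x (2*s₀)).exists_bound_of_continuousOn
      g.continuous.continuousOn
    set M : ℝ := max M₀ 0 with hMdef
    have hM : 0 ≤ M := le_max_right _ _
    have hbd : ∀ y ∈ closedBall x (2*s₀), |g y| ≤ M :=
      fun y hy => le_trans (hM₀ y hy) (le_max_left _ _)
    -- the density constant
    set θ : ℝ≥0∞ := ((2:ℝ≥0∞)^n * Cvol)⁻¹ with hθdef
    have h2nC0 : (2:ℝ≥0∞)^n * Cvol ≠ 0 := by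
      apply mul_ne_zero
      · positivity
      · exact hC0.ne'
    have h2nCtop : (2:ℝ≥0∞)^n * Cvol ≠ ⊤ := by
      exact ENNReal.mul_ne_top (by simp) hCtop.ne
    have hθ0 : θ ≠ 0 := by
      rw [hθdef]
      simp [h2nCtop]
    -- the key estimate for all small radii
    have key : ∀ r ∈ Ioc (0:ℝ) s₀,
        volume (D ∩ closedBall x r) / volume (closedBall x r) ≤ 1 - θ := by
      intro r hr
      obtain ⟨hr0, hrs₀⟩ := hr
      have hcb2r : closedBall x (2*r) ⊆ closedBall x (2*s₀) := by
        apply closedBall_subset_closedBall; linarith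
      have hconc_r : ConcaveOn ℝ (closedBall x (2*r)) ⇑g := by
        have base : ConcaveOn ℝ (closedBall x (2*r)) ψ :=
          hCconc.subset (hcb2r.trans hcb2s₀) (convex_closedBall _ _)
        refine ⟨convex_closedBall _ _, fun a ha b hb wa wb hwa hwb hab => ?_⟩
        have hmem := (convex_closedBall x (2*r)) ha hb hwa hwb hab
        rw [hgeq _ (hcb2r ha), hgeq _ (hcb2r hb), hgeq _ (hcb2r hmem)]
        exact base.2 ha hb hwa hwb hab
      have hbd_r : ∀ y ∈ closedBall x (2*r), |g y| ≤ M := fun y hy => hbd y (hcb2r hy)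
      obtain ⟨K, hKcomp, hKsub, hKvol, hKprox⟩ :=
        density_step g.continuous hr0 hM hconc_r hbd_r hCvol
      -- K is disjoint from D (in fact from Bad)
      have hKD : ∀ z ∈ K, z ∉ D := by
        intro z hzK hzD
        have hzU : z ∈ U := hcb2s₀ (hcb2r (closedBall_subset_closedBall (by linarith) (hKsub hzK)))
        have hzΩ : z ∈ Ω := hUΩ hzU
        obtain ⟨p, c', hc', hprox⟩ := hKprox z hzK
        have hz2r : z ∈ closedBall x (2*r) :=
          closedBall_subset_closedBall (by linarith) (hKsub hzK)
        -- proximal subgradient of T at z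
        have hP : ∃ p : EuclideanSpace ℝ (Fin n), ∃ c ρ : ℝ, 0 < c ∧ 0 < ρ ∧
            ∀ y ∈ ball z ρ ∩ Ω, T y - T z - (inner ℝ p (y - z) : ℝ) ≥ -c * ‖y - z‖ ^ 2 := by
          refine ⟨p + C • z, c', r, hc', hr0, ?_⟩
          rintro y ⟨hyb, -⟩
          have hy2r : y ∈ closedBall x (2*r) := by
            rw [mem_ball] at hyb
            rw [mem_closedBall]
            have h1 : dist z x ≤ r := hKsub hzK
            calc dist y x ≤ dist y z + dist z x := dist_triangle _ _ _
              _ ≤ r + r := by linarith [le_of_lt hyb]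
              _ = 2*r := by ring
          have h1 := hprox y hy2r
          rw [hgeq _ (hcb2r hy2r), hgeq _ (hcb2r hz2r)] at h1
          -- expand : T y - T z - ⟪p + C•z, y-z⟫
          have hnorm : ‖y‖^2 = ‖z‖^2 + 2*⟪z, y - z⟫ + ‖y - z‖^2 := by
            rw [show y = z + (y - z) by abel, norm_add_sq_real]
            abel_nf
          have hinn : (inner ℝ (p + C • z) (y - z) : ℝ) = ⟪p, y - z⟫ + C * ⟪z, y - z⟫ := by
            rw [inner_add_left, real_inner_smul_left]
          rw [hinn]
          have hCnn : 0 ≤ C / 2 * ‖y - z‖^2 := by positivity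
          rw [hψdef] at h1
          simp only at h1
          nlinarith [h1, hnorm, hCnn]
        obtain ⟨V, hVopen, hzV, hVΩ, hVsmooth⟩ := smoothing z hzΩ
          ⟨U, hUopen, hUconv, hzU, hUΩ, C, hC0', hCconc⟩ hP
        exact hzD.1.2 ⟨V, hVopen, hzV, hVΩ, hVsmooth⟩
      -- volume estimates
      set B : ℝ≥0∞ := volume (closedBall x r) with hBdef
      have hB0 : B ≠ 0 := (measure_closedBall_pos volume x hr0).ne'
      have hBtop : B ≠ ⊤ := measure_closedBall_lt_top.ne
      have hKB : volume K ≤ B := measure_mono hKsub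
      have hKtop : volume K ≠ ⊤ := lt_of_le_of_lt hKB (lt_top_iff_ne_top.2 hBtop) |>.ne
      -- B = 2^n * volume (closedBall x (r/2))
      have hhalf : B = (2:ℝ≥0∞)^n * volume (closedBall x (r/2)) := by
        rw [hBdef, Measure.addHaar_closedBall _ _ hr0.le,
          Measure.addHaar_closedBall _ _ (by linarith : (0:ℝ) ≤ r/2)]
        rw [← mul_assoc]
        congr 1
        rw [show ((2:ℝ≥0∞)^n) = ENNReal.ofReal ((2:ℝ)^n) by
          rw [ENNReal.ofReal_pow (by norm_num)]; norm_num]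
        rw [← ENNReal.ofReal_mul (by positivity)]
        congr 1
        rw [finrank_euclideanSpace_fin]
        rw [← mul_pow]
        congr 1
        ring
      have hθB : θ * B ≤ volume K := by
        have h1 : B ≤ ((2:ℝ≥0∞)^n * Cvol) * volume K := by
          rw [hhalf, mul_assoc]
          exact mul_le_mul_right hKvol _
        calc θ * B ≤ θ * (((2:ℝ≥0∞)^n * Cvol) * volume K) := mul_le_mul_right h1 _
          _ = (θ * ((2:ℝ≥0∞)^n * Cvol)) * volume K := by ring
          _ = volume K := by rw [hθdef, ENNReal.inv_mul_cancel h2nC0 h2nCtop, one_mul]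
      have hDK : D ∩ closedBall x r ⊆ closedBall x r \ K := by
        rintro w ⟨hwD, hwB⟩
        exact ⟨hwB, fun hwK => hKD w hwK hwD⟩
      have hmeas : volume (D ∩ closedBall x r) ≤ B - θ * B := by
        calc volume (D ∩ closedBall x r) ≤ volume (closedBall x r \ K) := measure_mono hDK
          _ = B - volume K := by
              rw [measure_diff hKsub hKcomp.measurableSet.nullMeasurableSet hKtop]
          _ ≤ B - θ * B := tsub_le_tsub_left hθB _
      rw [ENNReal.div_le_iff hB0 hBtop]
      calc volume (D ∩ closedBall x r) ≤ B - θ * B := hmeas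
        _ = 1 * B - θ * B := by rw [one_mul]
        _ = (1 - θ) * B := (ENNReal.sub_mul (fun _ _ => hBtop)).symm
    -- contradiction with density 1
    have hev : ∀ᶠ r in 𝓝[>] (0:ℝ),
        volume (D ∩ closedBall x r) / volume (closedBall x r) ≤ 1 - θ := by
      filter_upwards [Ioc_mem_nhdsGT hs₀] with r hr using key r hr
    have hle : (1:ℝ≥0∞) ≤ 1 - θ := le_of_tendsto hxTendsto hev
    have : (1:ℝ≥0∞) - θ < 1 := ENNReal.sub_lt_self one_ne_top one_ne_zero hθ0
    exact absurd hle (not_le.2 this)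
  refine le_antisymm ?_ zero_le
  calc volume Bad ≤ volume (S ∪ D) := measure_mono hsplit
    _ ≤ volume S + volume D := measure_union_le _ _
    _ = 0 := by rw [hSnull, hDnull, add_zero]

end
end

section
/- Let U ⊆ ℝⁿ be an open set and let f : U → ℝ be locally semiconcave on U. Then the set {x ∈ U : ∂_P f(x) = ∅} of points where f has no proximal subgradient has Lebesgue measure zero. -/
open Metric MeasureTheory
open Set Filter Topology
open scoped RealInnerProductSpace

/-!
Near each point, `f - C/2 ‖·‖²` is concave; restricted to a small ball it is Lipschitz, and its
sup-convolution with `L ‖·‖` extends it to a concave function on the whole space. Adding back the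
smooth quadratic does not affect the existence of proximal subgradients, so it suffices to show that
a concave `f` on a finite-dimensional space has a proximal subgradient almost everywhere.

Instead of Alexandroff's theorem we use the proximal map `J` of the convex function `h = -f`. It is
firmly nonexpansive, and `J (x + p) = x` whenever `p` is a subgradient of `h` at `x`, so every point
is a value of `J`. If `x = J z` where `J` is differentiable with invertible derivative, the bound
`‖w - z‖ ≤ C ‖J w - J z‖` near `z` propagates, by firm nonexpansiveness, to every `w` with `J w`
near `x`. Applied to `w = y + q` with `q` a subgradient at `y`, it makes the subdifferential of `h`
Lipschitz at `x`, which is a quadratic upper bound for `h` at `x`. All other points lie in the image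
under the Lipschitz map `J` of a null set (Rademacher) or of a set where `det DJ = 0`, both null.
-/

section NormedSpace

variable {E : Type*} [NormedAddCommGroup E] [NormedSpace ℝ E]

theorem LipschitzOnWith.addHaar_image_eq_zero [FiniteDimensional ℝ E] [MeasurableSpace E]
    [BorelSpace E] (μ : Measure E) [μ.IsAddHaarMeasure] {f : E → E} {K : NNReal} {s : Set E}
    (hf : LipschitzOnWith K f s) (hs : μ s = 0) : μ (f '' s) = 0 := by
  -- `μ` and the Hausdorff measure `μH[d]` have the same null sets, since `μHE[d]` is a nonzero
  -- multiple of `μH[d]` and an additive Haar measure.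
  have hnull (t : Set E) : μ t = 0 ↔ μH[Module.finrank ℝ E] t = 0 := by
    have h₁ : μ ≪ μHE[Module.finrank ℝ E] := Measure.absolutelyContinuous_isAddHaarMeasure _ _
    have h₂ : μHE[Module.finrank ℝ E] ≪ μ := Measure.absolutelyContinuous_isAddHaarMeasure _ _
    refine ⟨fun ht => ?_, fun ht => h₁ ?_⟩
    · simpa [Measure.euclideanHausdorffMeasure_def,
        Measure.addHaarScalarFactor_volume_hausdorffMeasure_ne_zero] using h₂ ht
    · simp [Measure.euclideanHausdorffMeasure_def, ht]
  rw [hnull] at hs ⊢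
  exact le_antisymm ((hf.hausdorffMeasure_image_le (Nat.cast_nonneg _)).trans (by simp [hs]))
    bot_le

theorem ConcaveOn.exists_concaveOn_univ_eqOn {s : Set E} {φ : E → ℝ} {L : NNReal}
    (hφ : ConcaveOn ℝ s φ) (hl : LipschitzOnWith L φ s) :
    ∃ g : E → ℝ, ConcaveOn ℝ univ g ∧ EqOn g φ s := by
  rcases s.eq_empty_or_nonempty with rfl | ⟨x₀, hx₀⟩
  · exact ⟨0, concaveOn_const 0 convex_univ, by simp⟩
  have : Nonempty s := ⟨⟨x₀, hx₀⟩⟩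
  have hdist := lipschitzOnWith_iff_dist_le_mul.1 hl
  set g : E → ℝ := fun w => ⨆ v : s, φ v - L * ‖w - v‖
  have hbdd (w : E) : BddAbove (range fun v : s => φ v - L * ‖w - v‖) := by
    refine ⟨φ x₀ + L * ‖w - x₀‖, ?_⟩
    rintro _ ⟨⟨v, hv⟩, rfl⟩
    have h₁ := (abs_le.1 (hdist v hv x₀ hx₀)).2
    have h₂ : ‖v - x₀‖ ≤ ‖w - v‖ + ‖w - x₀‖ := by
      simpa only [norm_sub_rev w v] using norm_sub_le_norm_sub_add_norm_sub v w x₀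
    rw [dist_eq_norm] at h₁
    dsimp only
    nlinarith [mul_le_mul_of_nonneg_left h₂ L.coe_nonneg]
  have heq : EqOn g φ s := fun w hw => by
    refine le_antisymm (ciSup_le fun ⟨v, hv⟩ => ?_) ?_
    · have := (abs_le.1 (hdist w hw v hv)).1
      rw [dist_eq_norm] at this
      dsimp only
      linarith
    · simpa using le_ciSup (hbdd w) ⟨w, hw⟩
  refine ⟨g, ⟨convex_univ, fun w₁ _ w₂ _ a b ha hb hab => ?_⟩, heq⟩
  have hpair (v₁ v₂ : s) : a * (φ v₁ - L * ‖w₁ - v₁‖) + b * (φ v₂ - L * ‖w₂ - v₂‖)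
      ≤ g (a • w₁ + b • w₂) := by
    have hv : a • (v₁ : E) + b • (v₂ : E) ∈ s := hφ.1 v₁.2 v₂.2 ha hb hab
    refine le_trans ?_ (le_ciSup (hbdd _) ⟨_, hv⟩)
    have hconc := hφ.2 v₁.2 v₂.2 ha hb hab
    have hnorm : ‖a • w₁ + b • w₂ - (a • (v₁ : E) + b • (v₂ : E))‖
        ≤ a * ‖w₁ - v₁‖ + b * ‖w₂ - v₂‖ := by
      rw [show a • w₁ + b • w₂ - (a • (v₁ : E) + b • (v₂ : E))
          = a • (w₁ - v₁) + b • (w₂ - v₂) by module]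
      refine (norm_add_le _ _).trans_eq ?_
      rw [norm_smul, norm_smul, Real.norm_of_nonneg ha, Real.norm_of_nonneg hb]
    simp only [smul_eq_mul] at hconc
    nlinarith [mul_le_mul_of_nonneg_left hnorm L.coe_nonneg]
  simp only [smul_eq_mul, g]
  rw [← le_sub_iff_add_le, Real.mul_iSup_of_nonneg ha]
  refine ciSup_le fun v₁ => ?_
  rw [le_sub_comm, Real.mul_iSup_of_nonneg hb]
  refine ciSup_le fun v₂ => ?_
  linarith [hpair v₁ v₂]

theorem ConcaveOn.exists_concaveOn_univ_eqOn_ball [FiniteDimensional ℝ E] {V : Set E} {φ : E → ℝ}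
    (hφ : ConcaveOn ℝ V φ) (hV : IsOpen V) {x₀ : E} (hx₀ : x₀ ∈ V) :
    ∃ g : E → ℝ, ConcaveOn ℝ univ g ∧ ∃ r > 0, EqOn g φ (ball x₀ r) := by
  obtain ⟨K, t, ht, hK⟩ := hφ.locallyLipschitzOn_interior (hV.interior_eq.symm ▸ hx₀)
  rw [hV.interior_eq, hV.nhdsWithin_eq hx₀] at ht
  obtain ⟨r, hr, hrt⟩ := Metric.mem_nhds_iff.1 (Filter.inter_mem ht (hV.mem_nhds hx₀))
  obtain ⟨g, hg, hgφ⟩ := (hφ.subset (hrt.trans inter_subset_right)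
    (convex_ball x₀ r)).exists_concaveOn_univ_eqOn (hK.mono (hrt.trans inter_subset_left))
  exact ⟨g, hg, r, hr, hgφ⟩

end NormedSpace

section InnerProductSpace

variable {E : Type*} [NormedAddCommGroup E] [InnerProductSpace ℝ E]

def HasSubgradientAt (h : E → ℝ) (p x : E) : Prop :=
  ∀ y, h x + ⟪p, y - x⟫ ≤ h y

def HasProximalSubgradientAt (f : E → ℝ) (p x : E) : Prop :=
  ∃ c, ∀ᶠ y in 𝓝 x, f x + ⟪p, y - x⟫ - c * ‖y - x‖ ^ 2 ≤ f y

def FirmlyNonexpansive (J : E → E) : Prop :=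
  ∀ a b, ‖J a - J b‖ ^ 2 ≤ ⟪a - b, J a - J b⟫

theorem HasSubgradientAt.inner_sub_nonneg {h : E → ℝ} {p q x y : E} (hp : HasSubgradientAt h p x)
    (hq : HasSubgradientAt h q y) : 0 ≤ ⟪p - q, x - y⟫ := by
  have h₁ := hp y
  have h₂ := hq x
  rw [← neg_sub x y, inner_neg_right] at h₁
  rw [inner_sub_left]
  linarith

theorem ConvexOn.exists_hasSubgradientAt [CompleteSpace E] {h : E → ℝ}
    (hc : ConvexOn ℝ univ h) (hcont : Continuous h) (x : E) : ∃ p, HasSubgradientAt h p x := by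
  have hopen : IsOpen {q : E × ℝ | q.1 ∈ univ ∧ h q.1 < q.2} := by
    simp only [mem_univ, true_and]
    exact isOpen_lt (hcont.comp continuous_fst) continuous_snd
  obtain ⟨ℓ, hℓ⟩ := geometric_hahn_banach_open_point (x := (x, h x))
    hc.convex_strict_epigraph hopen (by simp)
  -- `ℓ (y, t) = ℓ (y, 0) + t * a` with `a < 0`, so `-ℓ (·, 0) / a` is the slope of a
  -- supporting hyperplane of the epigraph at `(x, h x)`.
  set a := ℓ (0, 1)
  have hℓ_apply (y : E) (t : ℝ) : ℓ (y, t) = ℓ (y, 0) + t * a := by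
    rw [show (y, t) = (y, 0) + t • ((0 : E), (1 : ℝ)) by simp, map_add, map_smul, smul_eq_mul]
  have ha : a < 0 := by
    have := hℓ (x, h x + 1) (by simp)
    rw [hℓ_apply x (h x + 1), hℓ_apply x (h x)] at this
    linarith
  have hsupport (y : E) : ℓ (y, 0) + h y * a ≤ ℓ (x, 0) + h x * a := by
    refine le_of_forall_pos_lt_add fun ε hε => ?_
    have hεa : 0 < ε / -a := div_pos hε (neg_pos.2 ha)
    have := hℓ (y, h y + ε / -a) (by simpa using hεa)
    rw [hℓ_apply y, hℓ_apply x, add_mul, div_mul_eq_mul_div, div_neg, mul_div_assoc,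
      div_self ha.ne, mul_one] at this
    linarith
  refine ⟨(InnerProductSpace.toDual ℝ E).symm ((-a)⁻¹ • ℓ.comp (.inl ℝ E ℝ)), fun y => ?_⟩
  rw [InnerProductSpace.toDual_symm_apply]
  simp only [FunLike.coe_smul, Pi.smul_apply, ContinuousLinearMap.comp_apply,
    ContinuousLinearMap.inl_apply, smul_eq_mul]
  have hsub : ℓ (y - x, 0) = ℓ (y, 0) - ℓ (x, 0) := by
    rw [← map_sub, Prod.mk_sub_mk, sub_zero]
  have hb : 0 < (-a)⁻¹ := inv_pos.2 (neg_pos.2 ha)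
  have hba : (-a)⁻¹ * a = -1 := by field_simp [ha.ne]
  rw [hsub]
  linarith [mul_le_mul_of_nonneg_left (hsupport y) hb.le, congrArg (· * h x) hba,
    congrArg (· * h y) hba]

namespace FirmlyNonexpansive

variable {J : E → E}

theorem lipschitzWith (hJ : FirmlyNonexpansive J) : LipschitzWith 1 J := by
  refine LipschitzWith.of_dist_le_mul fun a b => ?_
  rw [dist_eq_norm, dist_eq_norm, NNReal.coe_one, one_mul]
  nlinarith [(hJ a b).trans (real_inner_le_norm _ _), norm_nonneg (a - b), norm_nonneg (J a - J b)]

theorem exists_norm_sub_le_mul_of_isBigO (hJ : FirmlyNonexpansive J) {z : E}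
    (hz : (· - z) =O[𝓝 z] (fun v => J v - J z)) :
    ∃ C δ, 0 < δ ∧ ∀ w, ‖J w - J z‖ < δ → ‖w - z‖ ≤ C * ‖J w - J z‖ := by
  obtain ⟨C, hC, hCz⟩ := hz.exists_pos
  obtain ⟨r, hr, hball⟩ := Metric.eventually_nhds_iff_ball.1 hCz.bound
  refine ⟨C, r / (2 * C ^ 2), by positivity, fun w hw => ?_⟩
  -- Otherwise `w` lies outside the ball `B(z, r)` where the bound holds. On the segment from `z`
  -- to `w`, firm nonexpansiveness makes `⟪w - z, J · - J z⟫` nondecreasing, so the point `v` with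
  -- `‖v - z‖ = r / 2` has `‖J v - J z‖² ≤ (r / 2) ‖J w - J z‖`, too small for the bound at `v`.
  by_contra hfar
  have hwz : r ≤ ‖w - z‖ := by
    by_contra! hwz
    exact hfar (hball w (by rwa [mem_ball, dist_eq_norm]))
  have hwz₀ : 0 < ‖w - z‖ := hr.trans_le hwz
  set t := r / (2 * ‖w - z‖) with ht_def
  set v := z + t • (w - z)
  have ht₀ : 0 < t := by positivity
  have ht : t * ‖w - z‖ = r / 2 := by rw [ht_def]; field_simp
  have ht₁ : t < 1 := by
    rw [ht_def, div_lt_one (by positivity)]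
    linarith
  have hvz : v - z = t • (w - z) := add_sub_cancel_left z _
  have hvz_norm : ‖v - z‖ = r / 2 := by rw [hvz, norm_smul, Real.norm_of_nonneg ht₀.le, ht]
  have hlow : r / 2 ≤ C * ‖J v - J z‖ :=
    hvz_norm ▸ hball v (by rw [mem_ball, dist_eq_norm, hvz_norm]; linarith)
  have hvw : 0 ≤ ⟪w - z, J w - J v⟫ := by
    have := (sq_nonneg _).trans (hJ w v)
    rw [show w - v = (1 - t) • (w - z) by rw [← sub_sub, ← hvz]; module, inner_smul_left] at this
    exact nonneg_of_mul_nonneg_right this (by simpa using ht₁)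
  have hvz' : ‖J v - J z‖ ^ 2 ≤ r / 2 * ‖J w - J z‖ := by
    calc ‖J v - J z‖ ^ 2 ≤ t * ⟪w - z, J v - J z⟫ := by
          simpa [hvz, inner_smul_left] using hJ v z
      _ ≤ t * ⟪w - z, J w - J z⟫ := by
          rw [show J w - J z = (J v - J z) + (J w - J v) by abel, inner_add_right]
          nlinarith
      _ ≤ t * (‖w - z‖ * ‖J w - J z‖) := by gcongr; exact real_inner_le_norm _ _
      _ = r / 2 * ‖J w - J z‖ := by rw [← mul_assoc, ht]
  have : (r / 2) ^ 2 < (r / 2) ^ 2 := by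
    calc (r / 2) ^ 2 ≤ C ^ 2 * ‖J v - J z‖ ^ 2 := by rw [← mul_pow]; gcongr
      _ ≤ C ^ 2 * (r / 2 * ‖J w - J z‖) := by gcongr
      _ < C ^ 2 * (r / 2 * (r / (2 * C ^ 2))) := by gcongr
      _ = (r / 2) ^ 2 := by field_simp
  exact lt_irrefl _ this

end FirmlyNonexpansive

namespace HasProximalSubgradientAt

variable {f g : E → ℝ} {p q x : E}

theorem congr_of_eventuallyEq (hf : HasProximalSubgradientAt f p x) (hfg : f =ᶠ[𝓝 x] g) :
    HasProximalSubgradientAt g p x := by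
  obtain ⟨c, hc⟩ := hf
  refine ⟨c, ?_⟩
  filter_upwards [hc, hfg] with y hy hfgy
  rwa [← hfgy, ← hfg.eq_of_nhds]

theorem add (hf : HasProximalSubgradientAt f p x) (hg : HasProximalSubgradientAt g q x) :
    HasProximalSubgradientAt (f + g) (p + q) x := by
  obtain ⟨c, hc⟩ := hf
  obtain ⟨d, hd⟩ := hg
  refine ⟨c + d, ?_⟩
  filter_upwards [hc, hd] with y hcy hdy
  simp only [Pi.add_apply, inner_add_left]
  linarith

theorem exists_pos_ball (hf : HasProximalSubgradientAt f p x) :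
    ∃ c ρ : ℝ, 0 < c ∧ 0 < ρ ∧ ∀ y ∈ ball x ρ, f y - f x - ⟪p, y - x⟫ ≥ -c * ‖y - x‖ ^ 2 := by
  obtain ⟨c, hc⟩ := hf
  obtain ⟨ρ, hρ, hball⟩ := Metric.eventually_nhds_iff_ball.1 hc
  refine ⟨max c 1, ρ, by positivity, hρ, fun y hy => ?_⟩
  nlinarith [hball y hy, le_max_left c 1, sq_nonneg ‖y - x‖]

end HasProximalSubgradientAt

theorem hasProximalSubgradientAt_const_mul_sq_norm (C : ℝ) (x : E) :
    HasProximalSubgradientAt (fun y => C / 2 * ‖y‖ ^ 2) (C • x) x := by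
  refine ⟨-C / 2, Eventually.of_forall fun y => le_of_eq ?_⟩
  have hy : ‖y‖ ^ 2 = ‖x‖ ^ 2 + 2 * ⟪x, y - x⟫ + ‖y - x‖ ^ 2 := by
    rw [← norm_add_sq_real, add_sub_cancel]
  simp only [real_inner_smul_left, hy]
  ring

/-- Junk (an arbitrary point) when `h + ‖· - z‖² / 2` has no minimiser. -/
noncomputable def prox (h : E → ℝ) (z : E) : E :=
  Classical.epsilon fun x => ∀ y, h x + ‖x - z‖ ^ 2 / 2 ≤ h y + ‖y - z‖ ^ 2 / 2

section ConvexOn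

variable {h : E → ℝ}

theorem ConvexOn.hasSubgradientAt_of_forall_le (hc : ConvexOn ℝ univ h) {x z : E}
    (hx : ∀ y, h x + ‖x - z‖ ^ 2 / 2 ≤ h y + ‖y - z‖ ^ 2 / 2) : HasSubgradientAt h (z - x) x := by
  intro y
  -- compare `x` with the points `(1 - t) • x + t • y` and let `t → 0`
  have hsmall : ∀ t ∈ Ioo (0 : ℝ) 1, ⟪z - x, y - x⟫ ≤ h y - h x + t / 2 * ‖y - x‖ ^ 2 := by
    rintro t ⟨ht₀, ht₁⟩
    have hconv := hc.2 (mem_univ x) (mem_univ y) (sub_nonneg.2 ht₁.le) ht₀.le (by ring)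
    have hmin := hx ((1 - t) • x + t • y)
    have hnorm : ‖(1 - t) • x + t • y - z‖ ^ 2
        = ‖x - z‖ ^ 2 + 2 * t * ⟪x - z, y - x⟫ + t ^ 2 * ‖y - x‖ ^ 2 := by
      rw [show (1 - t) • x + t • y - z = (x - z) + t • (y - x) by module, norm_add_sq_real,
        inner_smul_right, norm_smul, Real.norm_of_nonneg ht₀.le]
      ring
    rw [hnorm] at hmin
    simp only [smul_eq_mul] at hconv
    rw [← neg_sub x z, inner_neg_left]
    have : 0 ≤ t * (h y - h x + ⟪x - z, y - x⟫ + t / 2 * ‖y - x‖ ^ 2) := by linarith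
    nlinarith [nonneg_of_mul_nonneg_right this ht₀]
  have hlim : Tendsto (fun t : ℝ => h y - h x + t / 2 * ‖y - x‖ ^ 2) (𝓝[>] 0)
      (𝓝 (h y - h x)) := by
    apply tendsto_nhdsWithin_of_tendsto_nhds
    simpa using ((continuous_id.div_const 2).mul continuous_const).const_add (h y - h x)
      |>.tendsto 0
  have := ge_of_tendsto hlim (eventually_of_mem (Ioo_mem_nhdsGT one_pos) hsmall)
  linarith

variable [ProperSpace E]

theorem ConvexOn.exists_forall_add_sq_norm_sub_le (hc : ConvexOn ℝ univ h) (hcont : Continuous h)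
    (z : E) : ∃ x, ∀ y, h x + ‖x - z‖ ^ 2 / 2 ≤ h y + ‖y - z‖ ^ 2 / 2 := by
  obtain ⟨p, hp⟩ := hc.exists_hasSubgradientAt hcont z
  refine (hcont.add (by fun_prop)).exists_forall_le' z ?_
  filter_upwards [(isCompact_closedBall z (2 * ‖p‖)).compl_mem_cocompact] with y hy
  have hfar : 2 * ‖p‖ < ‖y - z‖ := by simpa [dist_eq_norm] using hy
  have hinner := neg_le_of_abs_le (abs_real_inner_le_norm p (y - z))
  have := hp y
  show h z + ‖z - z‖ ^ 2 / 2 ≤ h y + ‖y - z‖ ^ 2 / 2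
  rw [sub_self, norm_zero]
  nlinarith [norm_nonneg p]

theorem ConvexOn.prox_le (hc : ConvexOn ℝ univ h) (hcont : Continuous h) (z y : E) :
    h (prox h z) + ‖prox h z - z‖ ^ 2 / 2 ≤ h y + ‖y - z‖ ^ 2 / 2 :=
  Classical.epsilon_spec (hc.exists_forall_add_sq_norm_sub_le hcont z) y

theorem ConvexOn.hasSubgradientAt_prox (hc : ConvexOn ℝ univ h) (hcont : Continuous h) (z : E) :
    HasSubgradientAt h (z - prox h z) (prox h z) :=
  hc.hasSubgradientAt_of_forall_le (hc.prox_le hcont z)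

theorem ConvexOn.firmlyNonexpansive_prox (hc : ConvexOn ℝ univ h) (hcont : Continuous h) :
    FirmlyNonexpansive (prox h) := by
  intro a b
  have := (hc.hasSubgradientAt_prox hcont a).inner_sub_nonneg (hc.hasSubgradientAt_prox hcont b)
  rw [show a - prox h a - (b - prox h b) = (a - b) - (prox h a - prox h b) by abel,
    inner_sub_left, real_inner_self_eq_norm_sq] at this
  linarith

theorem ConvexOn.prox_add_eq (hc : ConvexOn ℝ univ h) (hcont : Continuous h) {p x : E}
    (hp : HasSubgradientAt h p x) : prox h (x + p) = x := by
  have := (hc.hasSubgradientAt_prox hcont (x + p)).inner_sub_nonneg hp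
  rw [show x + p - prox h (x + p) - p = -(prox h (x + p) - x) by abel, inner_neg_left,
    real_inner_self_eq_norm_sq, neg_nonneg] at this
  simpa [sub_eq_zero] using this

theorem ConvexOn.hasProximalSubgradientAt_neg_prox
    (hc : ConvexOn ℝ univ h) (hcont : Continuous h) {z : E}
    (hz : (· - z) =O[𝓝 z] (fun v => prox h v - prox h z)) :
    HasProximalSubgradientAt (-h) (prox h z - z) (prox h z) := by
  set x := prox h z
  obtain ⟨C, δ, hδ, hCδ⟩ :=
    (hc.firmlyNonexpansive_prox hcont).exists_norm_sub_le_mul_of_isBigO hz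
  refine ⟨C + 1, ?_⟩
  filter_upwards [ball_mem_nhds x hδ] with y hy
  obtain ⟨q, hq⟩ := hc.exists_hasSubgradientAt hcont y
  have hyq : prox h (y + q) = y := hc.prox_add_eq hcont hq
  have hw : ‖y + q - z‖ ≤ C * ‖y - x‖ := by
    simpa only [hyq] using hCδ (y + q) (by rwa [hyq, ← dist_eq_norm])
  have hqz : ‖q - (z - x)‖ ≤ (C + 1) * ‖y - x‖ := by
    calc ‖q - (z - x)‖ = ‖(y + q - z) - (y - x)‖ := by congr 1; abel
      _ ≤ ‖y + q - z‖ + ‖y - x‖ := norm_sub_le _ _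
      _ ≤ (C + 1) * ‖y - x‖ := by linarith
  have hsplit : ⟪q, y - x⟫ = ⟪z - x, y - x⟫ + ⟪q - (z - x), y - x⟫ := by
    rw [← inner_add_left, add_sub_cancel]
  have hsup := hq x
  rw [← neg_sub y x, inner_neg_right] at hsup
  rw [← neg_sub z x, inner_neg_left]
  simp only [Pi.neg_apply]
  nlinarith [real_inner_le_norm (q - (z - x)) (y - x),
    mul_le_mul_of_nonneg_right hqz (norm_nonneg (y - x))]

end ConvexOn

theorem ConcaveOn.ae_exists_hasProximalSubgradientAt [FiniteDimensional ℝ E] [MeasurableSpace E]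
    [BorelSpace E] (μ : Measure E) [μ.IsAddHaarMeasure] {f : E → ℝ} (hf : ConcaveOn ℝ univ f) :
    ∀ᵐ x ∂μ, ∃ p, HasProximalSubgradientAt f p x := by
  have hc : ConvexOn ℝ univ (-f) := hf.neg
  have hcont : Continuous (-f) := by
    simpa [interior_univ, continuousOn_univ] using hc.continuousOn_interior
  set J := prox (-f)
  have hJ : LipschitzWith 1 J := (hc.firmlyNonexpansive_prox hcont).lipschitzWith
  have hnondiff : μ (J '' {z | ¬ DifferentiableAt ℝ J z}) = 0 :=
    hJ.lipschitzOnWith.addHaar_image_eq_zero μ hJ.ae_differentiableAt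
  have hsingular : μ (J '' {z | DifferentiableAt ℝ J z ∧ (fderiv ℝ J z).det = 0}) = 0 :=
    addHaar_image_eq_zero_of_det_fderivWithin_eq_zero μ
      (fun z hz => hz.1.hasFDerivAt.hasFDerivWithinAt) fun z hz => hz.2
  refine ae_iff.2 (measure_mono_null (fun x hx => ?_) (measure_union_null hnondiff hsingular))
  obtain ⟨p, hp⟩ := hc.exists_hasSubgradientAt hcont x
  have hJx : J (x + p) = x := hc.prox_add_eq hcont hp
  by_cases hdiff : DifferentiableAt ℝ J (x + p)
  · by_cases hdet : (fderiv ℝ J (x + p)).det = 0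
    · exact Or.inr ⟨x + p, ⟨hdiff, hdet⟩, hJx⟩
    · have hinj : IsInducing (fderiv ℝ J (x + p)) :=
        ((fderiv ℝ J (x + p)).toContinuousLinearEquivOfDetNeZero hdet).toHomeomorph.isInducing
      have := hc.hasProximalSubgradientAt_neg_prox hcont
        (hdiff.hasFDerivAt.isTheta_sub hinj).isBigO_symm
      rw [hc.prox_add_eq hcont hp, neg_neg] at this
      exact absurd ⟨_, this⟩ hx
  · exact Or.inl ⟨x + p, hdiff, hJx⟩

end InnerProductSpace

theorem measure_zero_of_no_proximal_subgradient_general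
    {n : ℕ} (U : Set (EuclideanSpace ℝ (Fin n)))
    (f : EuclideanSpace ℝ (Fin n) → ℝ)
    (hsc : ∀ x ∈ U, ∃ V : Set (EuclideanSpace ℝ (Fin n)),
      IsOpen V ∧ Convex ℝ V ∧ x ∈ V ∧ V ⊆ U ∧
      ∃ C : ℝ, 0 ≤ C ∧ ConcaveOn ℝ V (fun y => f y - C / 2 * ‖y‖ ^ 2)) :
    volume {x ∈ U | ¬ ∃ p : EuclideanSpace ℝ (Fin n), ∃ c ρ : ℝ, 0 < c ∧ 0 < ρ ∧
      ∀ y ∈ ball x ρ ∩ U, f y - f x - (inner ℝ p (y - x) : ℝ) ≥ -c * ‖y - x‖ ^ 2} = 0 := by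
  refine measure_null_of_locally_null _ fun x₀ hx₀ => ?_
  obtain ⟨V, hV, -, hx₀V, -, C, -, hconc⟩ := hsc x₀ hx₀.1
  obtain ⟨g, hg, r, hr, hgf⟩ := hconc.exists_concaveOn_univ_eqOn_ball hV hx₀V
  refine ⟨_, inter_mem_nhdsWithin _ (ball_mem_nhds x₀ hr),
    measure_mono_null ?_ (ae_iff.1 (hg.ae_exists_hasProximalSubgradientAt volume))⟩
  rintro x ⟨⟨-, hx⟩, hxr⟩ ⟨p, hp⟩
  have hf : HasProximalSubgradientAt f (p + C • x) x := by
    convert (hp.congr_of_eventuallyEq (hgf.eventuallyEq_of_mem (isOpen_ball.mem_nhds hxr))).add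
      (hasProximalSubgradientAt_const_mul_sq_norm C x) using 1
    ext y
    simp
  obtain ⟨c, ρ, hc, hρ, hball⟩ := hf.exists_pos_ball
  exact hx ⟨p + C • x, c, ρ, hc, hρ, fun y hy => hball y hy.1⟩

/-- If `f` is locally semiconcave on an open set `U ⊆ ℝⁿ`, then the set of
points of `U` at which `f` has no proximal subgradient has Lebesgue measure zero. -/
theorem measure_zero_of_no_proximal_subgradient
    {n : ℕ} (U : Set (EuclideanSpace ℝ (Fin n))) (hU : IsOpen U)
    (f : EuclideanSpace ℝ (Fin n) → ℝ)
    (hsc : ∀ x ∈ U, ∃ V : Set (EuclideanSpace ℝ (Fin n)),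
      IsOpen V ∧ Convex ℝ V ∧ x ∈ V ∧ V ⊆ U ∧
      ∃ C : ℝ, 0 ≤ C ∧ ConcaveOn ℝ V (fun y => f y - C / 2 * ‖y‖ ^ 2)) :
    volume {x ∈ U | ¬ ∃ p : EuclideanSpace ℝ (Fin n), ∃ c ρ : ℝ, 0 < c ∧ 0 < ρ ∧
      ∀ y ∈ ball x ρ ∩ U, f y - f x - (inner ℝ p (y - x) : ℝ) ≥ -c * ‖y - x‖ ^ 2} = 0 :=
  measure_zero_of_no_proximal_subgradient_general U f hsc
end
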